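/- arXiv:2012.10959 — 2 statements merged into one kernel-verified Lean document; each statement's English description precedes it below -/
import Mathlib

section
/- Let ε ∈ [0,1) and let A_ε be the qubit amplitude damping channel A_ε(ρ) = A₀ ρ A₀† + A₁ ρ A₁† with A₀ = |0⟩⟨0| + √(1−ε)|1⟩⟨1| and A₁ = √ε |0⟩⟨1|. Then A_ε is invertible as a linear map on M₂(ℂ), its inverse A_ε⁻¹ is HPTP, and ν(A_ε⁻¹) = log₂((1+ε)/(1−ε)); equivalently 2^{ν(A_ε⁻¹)} = (1+ε)/(1−ε). -/
open scoped Kronecker ComplexOrder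
open Matrix

noncomputable section

/-- `id_k ⊗ N` applied blockwise. -/
def idTensor {n m : Type*} (k : Type*)
    (N : Matrix n n ℂ → Matrix m m ℂ)
    (M : Matrix (k × n) (k × n) ℂ) : Matrix (k × m) (k × m) ℂ :=
  Matrix.of fun p q => N (Matrix.of fun a b => M (p.1, a) (q.1, b)) p.2 q.2

/-- Trace-preserving. -/
def IsTP {n m : Type*} [Fintype n] [Fintype m]
    (N : Matrix n n ℂ → Matrix m m ℂ) : Prop :=
  ∀ X, (N X).trace = X.trace

/-- Hermitian-preserving. -/
def IsHP {n m : Type*} (N : Matrix n n ℂ → Matrix m m ℂ) : Prop :=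
  ∀ X, X.IsHermitian → (N X).IsHermitian

/-- Completely positive: for every `k`, `id_k ⊗ N` preserves positive semidefiniteness. -/
def IsCP {n m : Type*} [Fintype n] [Fintype m]
    (N : Matrix n n ℂ → Matrix m m ℂ) : Prop :=
  ∀ (k : ℕ) (M : Matrix (Fin k × n) (Fin k × n) ℂ),
    M.PosSemidef → (idTensor (Fin k) N M).PosSemidef

/-- Completely positive and trace-preserving (quantum channel). -/
def IsCPTP {n m : Type*} [Fintype n] [Fintype m]
    (N : Matrix n n ℂ → Matrix m m ℂ) : Prop :=
  IsLinearMap ℂ N ∧ IsCP N ∧ IsTP N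

/-- Completely positive and trace non-increasing. -/
def IsCPTN {n m : Type*} [Fintype n] [Fintype m]
    (N : Matrix n n ℂ → Matrix m m ℂ) : Prop :=
  IsLinearMap ℂ N ∧ IsCP N ∧ ∀ X : Matrix n n ℂ, X.PosSemidef → (N X).trace ≤ X.trace

/-- Costs of finite quasiprobability decompositions of `N` into CPTP maps. -/
def decompCosts {n m : Type*} [Fintype n] [Fintype m]
    (N : Matrix n n ℂ → Matrix m m ℂ) : Set ℝ :=
  { c | ∃ (s : ℕ) (η : Fin s → ℝ) (O : Fin s → (Matrix n n ℂ → Matrix m m ℂ)),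
      (∀ i, IsCPTP (O i)) ∧ (∀ X, N X = ∑ i, (η i : ℂ) • O i X) ∧ c = ∑ i, |η i| }

/-- The physical implementability `ν(N)`. -/
noncomputable def nu {n m : Type*} [Fintype n] [Fintype m]
    (N : Matrix n n ℂ → Matrix m m ℂ) : ℝ :=
  Real.logb 2 (sInf (decompCosts N))

/-- The Choi matrix of a linear map. -/
def choiMatrix {n m : Type*} [DecidableEq n]
    (N : Matrix n n ℂ → Matrix m m ℂ) : Matrix (n × m) (n × m) ℂ :=
  Matrix.of fun p q => N (Matrix.single p.1 q.1 1) p.2 q.2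

/-- Partial trace over the second tensor factor. -/
def ptraceB {n m : Type*} [Fintype m] (J : Matrix (n × m) (n × m) ℂ) :
    Matrix n n ℂ :=
  Matrix.of fun i j => ∑ a, J (i, a) (j, a)

/-- The trace norm of a matrix. -/
noncomputable def traceNorm {k : Type*} [Fintype k] [DecidableEq k]
    (X : Matrix k k ℂ) : ℝ :=
  (((Matrix.posSemidef_conjTranspose_mul_self X).1.eigenvectorUnitary.1 *
      Matrix.diagonal (((↑) : ℝ → ℂ) ∘ (√·) ∘ (Matrix.posSemidef_conjTranspose_mul_self X).1.eigenvalues) *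
      (star (Matrix.posSemidef_conjTranspose_mul_self X).1.eigenvectorUnitary :
        Matrix k k ℂ)).trace).re

/-- Tensor product of two maps. -/
def tensorMap {n₁ n₂ m₂ : Type*} [Fintype n₁] [DecidableEq n₁]
    (M : Matrix n₁ n₁ ℂ → Matrix n₁ n₁ ℂ) (N : Matrix n₂ n₂ ℂ → Matrix m₂ m₂ ℂ)
    (X : Matrix (n₁ × n₂) (n₁ × n₂) ℂ) : Matrix (n₁ × m₂) (n₁ × m₂) ℂ :=
  ∑ i : n₁, ∑ j : n₁,
    (M (Matrix.single i j 1)) ⊗ₖ (N (Matrix.of fun a b => X (i, a) (j, b)))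


/-- The qubit amplitude damping channel. -/
def adChannel (ε : ℝ) (X : Matrix (Fin 2) (Fin 2) ℂ) : Matrix (Fin 2) (Fin 2) ℂ :=
  !![1, 0; 0, (Real.sqrt (1 - ε) : ℂ)] * X * !![1, 0; 0, (Real.sqrt (1 - ε) : ℂ)]ᴴ +
  !![0, (Real.sqrt ε : ℂ); 0, 0] * X * !![0, (Real.sqrt ε : ℂ); 0, 0]ᴴ

/-! Writing `D` for the dephasing channel that damps coherences by `√(1 - ε)` and `R` for the
channel resetting every state to `|0⟩⟨0|`, one has `A_ε⁻¹ = (1 - ε)⁻¹ D - ε (1 - ε)⁻¹ R`, a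
decomposition of cost `(1 + ε) / (1 - ε)`. Conversely, in any decomposition
`A_ε⁻¹ = ∑ η_α O_α` evaluate both sides at `|1⟩⟨1|`: each `O_α |1⟩⟨1|` is a state, so the
difference of its two diagonal entries lies in `[-1, 1]`, whereas for `A_ε⁻¹ |1⟩⟨1|` that
difference is `(1 + ε) / (1 - ε)`; hence `∑ |η_α| ≥ (1 + ε) / (1 - ε)`. -/

section Kraus

variable {ι n m : Type*} [Fintype ι] [Fintype n]

def krausMap (K : ι → Matrix m n ℂ) (X : Matrix n n ℂ) : Matrix m m ℂ :=
  ∑ i, K i * X * (K i)ᴴ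

theorem isLinearMap_krausMap (K : ι → Matrix m n ℂ) : IsLinearMap ℂ (krausMap K) where
  map_add X Y := by simp only [krausMap, Matrix.mul_add, Matrix.add_mul, Finset.sum_add_distrib]
  map_smul c X := by simp only [krausMap, Matrix.mul_smul, Matrix.smul_mul, Finset.smul_sum]

theorem isHP_krausMap (K : ι → Matrix m n ℂ) : IsHP (krausMap K) := fun _ hX =>
  isSelfAdjoint_sum _ fun i _ => isHermitian_mul_mul_conjTranspose (K i) hX

theorem Matrix.PosSemidef.krausMap [Fintype m] {X : Matrix n n ℂ} (hX : X.PosSemidef)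
    (K : ι → Matrix m n ℂ) : (krausMap K X).PosSemidef :=
  posSemidef_sum _ fun i _ => hX.mul_mul_conjTranspose_same (K i)

theorem idTensor_krausMap (k : Type*) [Fintype k] [DecidableEq k] (K : ι → Matrix m n ℂ) :
    idTensor k (krausMap K) = krausMap fun i => (1 : Matrix k k ℂ) ⊗ₖ K i := by
  ext M ⟨p₁, p₂⟩ ⟨q₁, q₂⟩
  simp [idTensor, krausMap, Matrix.sum_apply, Matrix.mul_apply, Matrix.one_apply,
    Fintype.sum_prod_type, apply_ite (starRingEnd ℂ)]

theorem isCP_krausMap [Fintype m] (K : ι → Matrix m n ℂ) : IsCP (krausMap K) :=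
  fun k _ hM => idTensor_krausMap (Fin k) K ▸ hM.krausMap _

end Kraus

section Decomposition

variable {n m : Type*} [Fintype n] [Fintype m]

theorem IsCP.posSemidef {N : Matrix n n ℂ → Matrix m m ℂ} (h : IsCP N) {X : Matrix n n ℂ}
    (hX : X.PosSemidef) : (N X).PosSemidef :=
  (h 1 _ (hX.submatrix Prod.snd)).submatrix fun b : m => ((0 : Fin 1), b)

theorem Matrix.PosSemidef.abs_sub_diag_re_le_trace_re {A : Matrix n n ℂ} (hA : A.PosSemidef)
    (i j : n) : |(A i i).re - (A j j).re| ≤ A.trace.re := by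
  have hle (i : n) : (A i i).re ≤ A.trace.re :=
    (Complex.le_def.mp <| Finset.single_le_sum (f := fun k => A k k)
      (fun j _ => hA.diag_nonneg) (Finset.mem_univ i)).1
  have hnonneg (i : n) : 0 ≤ (A i i).re := (Complex.le_def.mp hA.diag_nonneg).1
  rw [abs_le]
  constructor <;> linarith [hle i, hle j, hnonneg i, hnonneg j]

theorem diag_sub_diag_le_of_mem_decompCosts {N : Matrix n n ℂ → Matrix m m ℂ} {c : ℝ}
    (hc : c ∈ decompCosts N) {ρ : Matrix n n ℂ} (hρ : ρ.PosSemidef) (hρ₁ : ρ.trace = 1)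
    (i j : m) : (N ρ i i).re - (N ρ j j).re ≤ c := by
  obtain ⟨s, η, O, hO, hN, rfl⟩ := hc
  have hdiff (a : Fin s) : |(O a ρ i i).re - (O a ρ j j).re| ≤ 1 := by
    simpa [(hO a).2.2 ρ, hρ₁] using ((hO a).2.1.posSemidef hρ).abs_sub_diag_re_le_trace_re i j
  calc (N ρ i i).re - (N ρ j j).re = ∑ a, η a * ((O a ρ i i).re - (O a ρ j j).re) := by
        simp [hN ρ, Matrix.sum_apply, Complex.re_sum, mul_sub, Finset.sum_sub_distrib]
    _ ≤ ∑ a, |η a| := Finset.sum_le_sum fun a _ => (le_abs_self _).trans <| by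
        rw [abs_mul]; exact mul_le_of_le_one_right (abs_nonneg _) (hdiff a)

theorem abs_add_abs_mem_decompCosts {N O₁ O₂ : Matrix n n ℂ → Matrix m m ℂ}
    (h₁ : IsCPTP O₁) (h₂ : IsCPTP O₂) {a b : ℝ}
    (hN : ∀ X, N X = (a : ℂ) • O₁ X + (b : ℂ) • O₂ X) :
    |a| + |b| ∈ decompCosts N :=
  ⟨2, ![a, b], ![O₁, O₂], fun i => by fin_cases i <;> assumption,
    fun X => by simp [Fin.sum_univ_two, hN], by simp [Fin.sum_univ_two]⟩

theorem nu_eq_logb_of_isLeast {N : Matrix n n ℂ → Matrix m m ℂ} {c : ℝ}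
    (h : IsLeast (decompCosts N) c) : nu N = Real.logb 2 c := by
  rw [nu, h.csInf_eq]

end Decomposition

section Combination

variable {n m : Type*} {O₁ O₂ : Matrix n n ℂ → Matrix m m ℂ} {a b : ℝ}

theorem IsLinearMap.ofReal_smul_add_smul (h₁ : IsLinearMap ℂ O₁) (h₂ : IsLinearMap ℂ O₂) :
    IsLinearMap ℂ fun X => (a : ℂ) • O₁ X + (b : ℂ) • O₂ X :=
  ((a : ℂ) • h₁.mk' O₁ + (b : ℂ) • h₂.mk' O₂).isLinear

theorem IsHP.ofReal_smul_add_smul (h₁ : IsHP O₁) (h₂ : IsHP O₂) :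
    IsHP fun X => (a : ℂ) • O₁ X + (b : ℂ) • O₂ X := fun X hX =>
  ((h₁ X hX).smul (Complex.conj_ofReal a)).add ((h₂ X hX).smul (Complex.conj_ofReal b))

theorem IsTP.ofReal_smul_add_smul [Fintype n] [Fintype m] (h₁ : IsTP O₁) (h₂ : IsTP O₂)
    (hab : a + b = 1) :
    IsTP fun X => (a : ℂ) • O₁ X + (b : ℂ) • O₂ X := fun X => by
  rw [Matrix.trace_add, Matrix.trace_smul, Matrix.trace_smul, h₁, h₂, smul_eq_mul, smul_eq_mul,
    ← add_mul, ← Complex.ofReal_add, hab, Complex.ofReal_one, one_mul]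

end Combination

section Qubit

def dephasing (s : ℝ) (X : Matrix (Fin 2) (Fin 2) ℂ) : Matrix (Fin 2) (Fin 2) ℂ :=
  !![X 0 0, s * X 0 1; s * X 1 0, X 1 1]

def resetZero (X : Matrix (Fin 2) (Fin 2) ℂ) : Matrix (Fin 2) (Fin 2) ℂ :=
  !![X.trace, 0; 0, 0]

theorem dephasing_eq_krausMap {s : ℝ} (hs : |s| ≤ 1) :
    dephasing s =
      krausMap ![(√((1 + s) / 2) : ℂ) • 1, (√((1 - s) / 2) : ℂ) • !![1, 0; 0, -1]] := by
  obtain ⟨hs₀, hs₁⟩ := abs_le.mp hs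
  have hp := Real.mul_self_sqrt (show 0 ≤ (1 + s) / 2 by linarith)
  have hm := Real.mul_self_sqrt (show 0 ≤ (1 - s) / 2 by linarith)
  generalize √((1 + s) / 2) = p at hp ⊢
  generalize √((1 - s) / 2) = m at hm ⊢
  replace hp : (p : ℂ) * p = (1 + s) / 2 := by exact_mod_cast hp
  replace hm : (m : ℂ) * m = (1 - s) / 2 := by exact_mod_cast hm
  ext X i j
  fin_cases i <;> fin_cases j <;>
    simp [dephasing, krausMap, Fin.sum_univ_two, Matrix.vecMul, dotProduct, Matrix.mul_apply,
      Matrix.conjTranspose_apply, Complex.conj_ofReal]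
  · linear_combination (-X 0 0) * (hp + hm)
  · linear_combination (-X 0 1) * (hp - hm)
  · linear_combination (-X 1 0) * (hp - hm)
  · linear_combination (-X 1 1) * (hp + hm)

theorem resetZero_eq_krausMap :
    resetZero = krausMap ![Matrix.single 0 0 1, Matrix.single 0 1 1] := by
  ext X i j
  fin_cases i <;> fin_cases j <;>
    simp [resetZero, krausMap, Fin.sum_univ_two, Matrix.trace_fin_two]

theorem isCPTP_dephasing {s : ℝ} (hs : |s| ≤ 1) : IsCPTP (dephasing s) := by
  refine ⟨?_, ?_, fun X => by simp [dephasing, Matrix.trace_fin_two]⟩ <;>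
    rw [dephasing_eq_krausMap hs]
  exacts [isLinearMap_krausMap _, isCP_krausMap _]

theorem isCPTP_resetZero : IsCPTP resetZero := by
  refine ⟨?_, ?_, fun X => by simp [resetZero, Matrix.trace_fin_two]⟩ <;>
    rw [resetZero_eq_krausMap]
  exacts [isLinearMap_krausMap _, isCP_krausMap _]

theorem isHP_dephasing {s : ℝ} (hs : |s| ≤ 1) : IsHP (dephasing s) :=
  dephasing_eq_krausMap hs ▸ isHP_krausMap _

theorem isHP_resetZero : IsHP resetZero :=
  resetZero_eq_krausMap ▸ isHP_krausMap _

def adInverse (ε : ℝ) (X : Matrix (Fin 2) (Fin 2) ℂ) : Matrix (Fin 2) (Fin 2) ℂ :=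
  (((1 - ε)⁻¹ : ℝ) : ℂ) • dephasing √(1 - ε) X + ((-(ε / (1 - ε)) : ℝ) : ℂ) • resetZero X

variable {ε : ℝ}

theorem adChannel_eq (hε₀ : 0 ≤ ε) (hε₁ : ε ≤ 1) (X : Matrix (Fin 2) (Fin 2) ℂ) :
    adChannel ε X =
      !![X 0 0 + ε * X 1 1, √(1 - ε) * X 0 1; √(1 - ε) * X 1 0, (1 - ε) * X 1 1] := by
  unfold adChannel
  have hr := Real.mul_self_sqrt (sub_nonneg.mpr hε₁)
  have hq := Real.mul_self_sqrt hε₀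
  generalize √(1 - ε) = r at hr ⊢
  generalize √ε = q at hq ⊢
  replace hr : (r : ℂ) * r = 1 - ε := by exact_mod_cast hr
  replace hq : (q : ℂ) * q = ε := by exact_mod_cast hq
  ext i j
  fin_cases i <;> fin_cases j <;>
    simp [Matrix.vecMul, dotProduct, Matrix.mul_apply, Matrix.conjTranspose_apply,
      Complex.conj_ofReal]
  · linear_combination X 1 1 * hq
  · ring
  · linear_combination X 1 1 * hr

theorem adInverse_eq (hε₁ : ε < 1) (X : Matrix (Fin 2) (Fin 2) ℂ) :
    adInverse ε X =
      !![X 0 0 - ε / (1 - ε) * X 1 1, X 0 1 / √(1 - ε); X 1 0 / √(1 - ε), X 1 1 / (1 - ε)] := by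
  unfold adInverse
  have hr := Real.mul_self_sqrt (sub_nonneg.mpr hε₁.le)
  have hr₀ := Real.sqrt_ne_zero'.mpr (sub_pos.mpr hε₁)
  generalize √(1 - ε) = r at hr hr₀ ⊢
  replace hr : (r : ℂ) * r = 1 - ε := by exact_mod_cast hr
  have hε : (1 - ε : ℂ) ≠ 0 := by exact_mod_cast (sub_pos.mpr hε₁).ne'
  ext i j
  fin_cases i <;> fin_cases j <;>
    simp [dephasing, resetZero, Matrix.trace_fin_two]
  all_goals field_simp
  · ring
  · linear_combination X 0 1 * hr
  · linear_combination X 1 0 * hr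

theorem adInverse_adChannel (hε₀ : 0 ≤ ε) (hε₁ : ε < 1) (X : Matrix (Fin 2) (Fin 2) ℂ) :
    adInverse ε (adChannel ε X) = X := by
  rw [adInverse_eq hε₁, adChannel_eq hε₀ hε₁.le]
  have hr₀ := Real.sqrt_ne_zero'.mpr (sub_pos.mpr hε₁)
  have hε : (1 - ε : ℂ) ≠ 0 := by exact_mod_cast (sub_pos.mpr hε₁).ne'
  ext i j
  fin_cases i <;> fin_cases j <;> simp [field]

theorem abs_sqrt_one_sub_le_one (hε₀ : 0 ≤ ε) : |√(1 - ε)| ≤ 1 := by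
  rw [abs_of_nonneg (Real.sqrt_nonneg _)]
  exact Real.sqrt_le_one.mpr (by linarith)

theorem isLeast_decompCosts_adInverse (hε₀ : 0 ≤ ε) (hε₁ : ε < 1) :
    IsLeast (decompCosts (adInverse ε)) ((1 + ε) / (1 - ε)) := by
  have hε : 0 < 1 - ε := sub_pos.mpr hε₁
  constructor
  · have hcost : |(1 - ε)⁻¹| + |-(ε / (1 - ε))| = (1 + ε) / (1 - ε) := by
      rw [abs_of_pos (inv_pos.mpr hε), abs_neg, abs_of_nonneg (div_nonneg hε₀ hε.le)]
      field_simp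
    exact hcost ▸ abs_add_abs_mem_decompCosts
      (isCPTP_dephasing (abs_sqrt_one_sub_le_one hε₀)) isCPTP_resetZero fun X => rfl
  · intro c hc
    have hρ : (Matrix.diagonal ![0, 1] : Matrix (Fin 2) (Fin 2) ℂ).PosSemidef :=
      Matrix.posSemidef_diagonal_iff.mpr fun i => by fin_cases i <;> simp
    have hdiag := diag_sub_diag_le_of_mem_decompCosts hc hρ (by simp) 1 0
    simp [adInverse, dephasing, resetZero, -Complex.ofReal_inv, -Complex.ofReal_div,
      -Complex.ofReal_neg] at hdiag
    calc (1 + ε) / (1 - ε) = (1 - ε)⁻¹ + ε / (1 - ε) := by field_simp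
      _ ≤ c := hdiag

end Qubit

/-- the amplitude damping channel `A_ε` (with `0 ≤ ε < 1`) is invertible,
its inverse is HPTP, and `ν(A_ε⁻¹) = log₂((1+ε)/(1-ε))`. -/
theorem nu_amplitude_damping_inverse (ε : ℝ) (hε0 : 0 ≤ ε) (hε1 : ε < 1) :
    ∃ Ainv : Matrix (Fin 2) (Fin 2) ℂ → Matrix (Fin 2) (Fin 2) ℂ,
      IsLinearMap ℂ Ainv ∧ (∀ X, Ainv (adChannel ε X) = X) ∧
      IsHP Ainv ∧ IsTP Ainv ∧
      nu Ainv = Real.logb 2 ((1 + ε) / (1 - ε)) := by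
  have hs := abs_sqrt_one_sub_le_one hε0
  obtain ⟨hDlin, -, hDtp⟩ := isCPTP_dephasing hs
  obtain ⟨hRlin, -, hRtp⟩ := isCPTP_resetZero
  have hcoeff : (1 - ε)⁻¹ + -(ε / (1 - ε)) = 1 := by
    field_simp [(sub_pos.mpr hε1).ne']
    ring
  exact ⟨adInverse ε, hDlin.ofReal_smul_add_smul hRlin, adInverse_adChannel hε0 hε1,
    (isHP_dephasing hs).ofReal_smul_add_smul isHP_resetZero,
    hDtp.ofReal_smul_add_smul hRtp hcoeff,
    nu_eq_logb_of_isLeast (isLeast_decompCosts_adInverse hε0 hε1)⟩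

end
end

section
/- Let N be an HPTP linear map on M_d(ℂ). Define the robustness of physical implementability R(N) = min{ s ≥ 0 : there exists a CPTP map T such that (N + sT)/(1+s) is CPTP }. Then 2^{ν(N)} = 2R(N) + 1. -/
/-!
A quasiprobability decomposition `N = ∑ ηᵢ Oᵢ` into channels has `∑ ηᵢ = 1` because all maps
preserve the trace. Collecting positive and negative parts gives `N = (1 + q) P - q T` with
channels `P`, `T` and `q = ∑ ηᵢ⁻`, so the cost `∑ |ηᵢ| = 1 + 2q` with `q` in the robustness set;
conversely every `s` in the robustness set yields `N = (1 + s) P - s T`, of cost `2s + 1`.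
Hence the least cost is `2R + 1` as soon as the robustness `R` is attained.

Attainment: in terms of the Choi matrix `J` of `N`, the robustness set is
`{s ≥ 0 | J + s K ⪰ 0 for some K ⪰ 0 with Tr_B K = 1}`. These `K` form a compact set, so the
robustness set is closed; it is nonempty because `J` is Hermitian, so `J + c • 1 ⪰ 0` for
large `c`.
-/

open scoped Kronecker ComplexOrder
open Matrix

noncomputable section

namespace Matrix

variable {ι : Type*} [Fintype ι]

theorem isClosed_setOf_posSemidef [DecidableEq ι] :
    IsClosed {A : Matrix ι ι ℂ | A.PosSemidef} := by
  open scoped Matrix.Norms.L2Operator MatrixOrder in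
  simpa only [nonneg_iff_posSemidef] using
    (CStarAlgebra.isClosed_nonneg : IsClosed {A : Matrix ι ι ℂ | 0 ≤ A})

theorem IsHermitian.exists_posSemidef_add_smul_one [DecidableEq ι] {J : Matrix ι ι ℂ}
    (hJ : J.IsHermitian) : ∃ c : ℝ, 0 ≤ c ∧ (J + (c : ℂ) • 1).PosSemidef := by
  open scoped Matrix.Norms.L2Operator MatrixOrder in
  refine ⟨‖J‖, norm_nonneg J, ?_⟩
  have h := sub_nonneg.mpr hJ.isSelfAdjoint.neg_algebraMap_norm_le_self
  rw [Algebra.algebraMap_eq_smul_one, sub_neg_eq_add] at h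
  simpa only [nonneg_iff_posSemidef, Complex.coe_smul] using h

theorem PosSemidef.norm_apply_le_trace_re {K : Matrix ι ι ℂ} (hK : K.PosSemidef) (p q : ι) :
    ‖K p q‖ ≤ K.trace.re := by
  have hdet := (hK.submatrix ![p, q]).det_nonneg
  simp only [det_fin_two, submatrix_apply, cons_val_zero, cons_val_one] at hdet
  rw [← hK.1.apply q p, Complex.star_def, Complex.mul_conj, Complex.normSq_eq_norm_sq] at hdet
  obtain ⟨hdet, -⟩ := Complex.nonneg_iff.mp hdet
  have hdiag i : 0 ≤ (K i i).re ∧ 0 = (K i i).im := Complex.nonneg_iff.mp hK.diag_nonneg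
  have hle i : (K i i).re ≤ K.trace.re := by
    rw [trace, Complex.re_sum]
    exact Finset.single_le_sum (f := fun i => (K i i).re) (fun i _ => (hdiag i).1)
      (Finset.mem_univ i)
  simp only [Complex.sub_re, Complex.mul_re, ← (hdiag p).2, ← (hdiag q).2] at hdet
  norm_cast at hdet
  nlinarith [hdiag p, hdiag q, hle p, hle q, norm_nonneg (K p q)]

end Matrix

section PartialTrace

variable {n m : Type*} [Fintype m]

theorem trace_ptraceB [Fintype n] (K : Matrix (n × m) (n × m) ℂ) :
    (ptraceB K).trace = K.trace := by
  simp [ptraceB, trace, Fintype.sum_prod_type]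

theorem continuous_ptraceB : Continuous (ptraceB : Matrix (n × m) (n × m) ℂ → Matrix n n ℂ) :=
  continuous_matrix fun _ _ => continuous_finsetSum _ fun _ _ => continuous_id.matrix_elem _ _

theorem ptraceB_smul (c : ℂ) (K : Matrix (n × m) (n × m) ℂ) :
    ptraceB (c • K) = c • ptraceB K := by
  ext i j
  simp [ptraceB, Finset.mul_sum]

theorem ptraceB_one [DecidableEq n] [DecidableEq m] :
    ptraceB (1 : Matrix (n × m) (n × m) ℂ) = (Fintype.card m : ℂ) • 1 := by
  ext i j
  by_cases h : i = j <;> simp [ptraceB, one_apply, h]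

end PartialTrace

section Choi

variable {n m : Type*} {Φ : Matrix n n ℂ → Matrix m m ℂ}

theorem IsHP.map_conjTranspose (hlin : IsLinearMap ℂ Φ) (hΦ : IsHP Φ) (X : Matrix n n ℂ) :
    Φ Xᴴ = (Φ X)ᴴ := by
  have hA : (realPart X : Matrix n n ℂ).IsHermitian := (realPart X).2
  have hB : (imaginaryPart X : Matrix n n ℂ).IsHermitian := (imaginaryPart X).2
  rw [← realPart_add_I_smul_imaginaryPart X]
  simp only [conjTranspose_add, conjTranspose_smul, hA.eq, hB.eq, hlin.map_add, hlin.map_smul,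
    hlin.map_neg, (hΦ _ hA).eq, (hΦ _ hB).eq, Complex.star_def, Complex.conj_I, neg_smul]

theorem IsHP.isHermitian_choiMatrix [DecidableEq n] (hlin : IsLinearMap ℂ Φ) (hΦ : IsHP Φ) :
    (choiMatrix Φ).IsHermitian := by
  ext ⟨i, a⟩ ⟨j, b⟩
  have h := congrFun₂ (hΦ.map_conjTranspose hlin (single j i 1)) a b
  simpa [choiMatrix, conjTranspose_single] using h.symm

variable [Fintype n]

def ofChoiMatrix (K : Matrix (n × m) (n × m) ℂ) (X : Matrix n n ℂ) : Matrix m m ℂ :=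
  Matrix.of fun a b => ∑ i, ∑ j, X i j * K (i, a) (j, b)

theorem isLinearMap_ofChoiMatrix (K : Matrix (n × m) (n × m) ℂ) :
    IsLinearMap ℂ (ofChoiMatrix K) where
  map_add X Y := by ext; simp [ofChoiMatrix, add_mul, Finset.sum_add_distrib]
  map_smul c X := by ext; simp [ofChoiMatrix, Finset.mul_sum, mul_assoc]

theorem choiMatrix_ofChoiMatrix [DecidableEq n] (K : Matrix (n × m) (n × m) ℂ) :
    choiMatrix (ofChoiMatrix K) = K := by
  ext ⟨i, a⟩ ⟨j, b⟩
  simp [choiMatrix, ofChoiMatrix, single_apply, ite_and]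

theorem ofChoiMatrix_choiMatrix [DecidableEq n] (hΦ : IsLinearMap ℂ Φ) :
    ofChoiMatrix (choiMatrix Φ) = Φ := by
  funext X
  have hX : X = ∑ i, ∑ j, X i j • single i j (1 : ℂ) := by
    simpa [smul_single] using matrix_eq_sum_single X
  have hΦX : Φ X = ∑ i, ∑ j, X i j • Φ (single i j 1) := by
    change hΦ.mk' Φ X = _
    conv_lhs => rw [hX]
    simp only [map_sum, map_smul]
    rfl
  ext a b
  simp [hΦX, ofChoiMatrix, choiMatrix, Matrix.sum_apply]

theorem isTP_ofChoiMatrix [Fintype m] [DecidableEq n] {K : Matrix (n × m) (n × m) ℂ}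
    (hK : ptraceB K = 1) : IsTP (ofChoiMatrix K) := by
  intro X
  have h i j : ∑ a, K (i, a) (j, a) = (1 : Matrix n n ℂ) i j := by
    rw [← hK]; rfl
  calc (ofChoiMatrix K X).trace = ∑ i, ∑ j, X i j * ∑ a, K (i, a) (j, a) := by
        simp only [trace, diag, ofChoiMatrix, of_apply, Finset.mul_sum]
        rw [Finset.sum_comm]
        exact Finset.sum_congr rfl fun i _ => Finset.sum_comm
    _ = X.trace := by simp [h, one_apply, trace]

theorem posSemidef_idTensor_ofChoiMatrix {k : Type*} [Fintype k] [Fintype m] [DecidableEq k]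
    [DecidableEq n] [DecidableEq m] {K : Matrix (n × m) (n × m) ℂ} (hK : K.PosSemidef)
    {M : Matrix (k × n) (k × n) ℂ} (hM : M.PosSemidef) :
    (idTensor k (ofChoiMatrix K) M).PosSemidef := by
  -- `V` identifies the second index of `M` with the input index of `K` and sums over it.
  let V : Matrix (k × m) ((k × n) × (n × m)) ℂ := Matrix.of fun x u =>
    if u.1.1 = x.1 ∧ u.2.1 = u.1.2 ∧ u.2.2 = x.2 then 1 else 0
  have hV : idTensor k (ofChoiMatrix K) M = V * (M ⊗ₖ K) * Vᴴ := by
    ext ⟨p, a⟩ ⟨q, b⟩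
    simp [V, idTensor, ofChoiMatrix, mul_apply, Fintype.sum_prod_type, ite_and,
      apply_ite (starRingEnd ℂ), mul_ite, Finset.sum_ite_eq']
    exact Finset.sum_comm
  rw [hV]
  exact (hM.kronecker hK).mul_mul_conjTranspose_same V

theorem isCP_ofChoiMatrix [Fintype m] [DecidableEq n] [DecidableEq m]
    {K : Matrix (n × m) (n × m) ℂ} (hK : K.PosSemidef) : IsCP (ofChoiMatrix K) :=
  fun _ _ hM => posSemidef_idTensor_ofChoiMatrix hK hM

theorem IsCP.posSemidef_choiMatrix [Fintype m] [DecidableEq n] (hΦ : IsCP Φ) :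
    (choiMatrix Φ).PosSemidef := by
  -- `choiMatrix Φ` is `id ⊗ Φ` applied to the projection onto `∑ i, |i⟩ ⊗ |i⟩`.
  let e := Fintype.equivFin n
  let v : Fin (Fintype.card n) × n → ℂ := fun p => if e.symm p.1 = p.2 then 1 else 0
  have hchoi : choiMatrix Φ =
      (idTensor _ Φ (vecMulVec v (star v))).submatrix (Prod.map e id) (Prod.map e id) := by
    ext ⟨i, a⟩ ⟨j, b⟩
    simp only [idTensor, choiMatrix, vecMulVec, v, submatrix_apply, of_apply]
    congr 2
    ext x y
    simp [single_apply, ← ite_and, and_comm]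
  rw [hchoi]
  exact (hΦ _ _ (posSemidef_vecMulVec_self_star v)).submatrix _

theorem IsTP.ptraceB_choiMatrix [Fintype m] [DecidableEq n] (hΦ : IsTP Φ) :
    ptraceB (choiMatrix Φ) = 1 := by
  ext i j
  have h : ∑ a, Φ (single i j 1) a a = (Φ (single i j 1)).trace := rfl
  simp only [ptraceB, choiMatrix, of_apply]
  rw [h, hΦ]
  by_cases hij : i = j <;> simp [hij, one_apply]

theorem isCP_iff_posSemidef_choiMatrix [Fintype m] [DecidableEq n] [DecidableEq m]
    (hΦ : IsLinearMap ℂ Φ) : IsCP Φ ↔ (choiMatrix Φ).PosSemidef :=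
  ⟨IsCP.posSemidef_choiMatrix, fun h => ofChoiMatrix_choiMatrix hΦ ▸ isCP_ofChoiMatrix h⟩

end Choi

section Robustness

variable {n m : Type*} [Fintype n] [Fintype m] [DecidableEq n] [DecidableEq m]

def channelChoiSet (n m : Type*) [Fintype m] [DecidableEq n] : Set (Matrix (n × m) (n × m) ℂ) :=
  {K | K.PosSemidef ∧ ptraceB K = 1}

def robustnessSet (N : Matrix n n ℂ → Matrix m m ℂ) : Set ℝ :=
  {s | 0 ≤ s ∧ ∃ T : Matrix n n ℂ → Matrix m m ℂ, IsCPTP T ∧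
    IsCPTP (fun X => (((1 + s)⁻¹ : ℝ) : ℂ) • (N X + (s : ℂ) • T X))}

def choiRobustnessSet (J : Matrix (n × m) (n × m) ℂ) : Set ℝ :=
  {s | 0 ≤ s ∧ ∃ K ∈ channelChoiSet n m, (J + (s : ℂ) • K).PosSemidef}

theorem isCompact_channelChoiSet : IsCompact (channelChoiSet n m) := by
  refine IsCompact.of_isClosed_subset (isCompact_univ_pi fun _ => isCompact_univ_pi fun _ =>
      isCompact_closedBall (0 : ℂ) (Fintype.card n))
    (isClosed_setOf_posSemidef.inter (isClosed_eq continuous_ptraceB continuous_const)) ?_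
  rintro K ⟨hK, hK1⟩ p - q -
  have htr : K.trace.re = Fintype.card n := by simp [← trace_ptraceB, hK1]
  simpa [htr] using hK.norm_apply_le_trace_re p q

theorem isClosed_choiRobustnessSet (J : Matrix (n × m) (n × m) ℂ) :
    IsClosed (choiRobustnessSet J) := by
  have : CompactSpace (channelChoiSet n m) := isCompact_iff_compactSpace.mp isCompact_channelChoiSet
  have hF : IsClosed {p : ℝ × channelChoiSet n m |
      0 ≤ p.1 ∧ (J + (p.1 : ℂ) • (p.2 : Matrix (n × m) (n × m) ℂ)).PosSemidef} :=
    (isClosed_le continuous_const continuous_fst).inter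
      (isClosed_setOf_posSemidef.preimage (by fun_prop))
  convert isClosedMap_fst_of_compactSpace _ hF using 1
  ext s
  simp [choiRobustnessSet]

theorem choiRobustnessSet_nonempty [Nonempty m] {J : Matrix (n × m) (n × m) ℂ}
    (hJ : J.IsHermitian) : (choiRobustnessSet J).Nonempty := by
  obtain ⟨c, hc, hJc⟩ := hJ.exists_posSemidef_add_smul_one
  have hm : (0 : ℝ) < Fintype.card m := by exact_mod_cast Fintype.card_pos
  -- `|m|⁻¹ • 1` is the Choi matrix of the completely depolarizing channel.
  refine ⟨c * Fintype.card m, by positivity, (((Fintype.card m : ℝ)⁻¹ : ℝ) : ℂ) • 1,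
    ⟨?_, ?_⟩, ?_⟩
  · exact (PosSemidef.one (n := n × m) (R := ℂ)).smul
      (Complex.zero_le_real.mpr (inv_nonneg.mpr hm.le))
  · rw [ptraceB_smul, ptraceB_one, smul_smul]
    simp
  · convert hJc using 2
    rw [smul_smul]
    congr 1
    push_cast
    field_simp

theorem robustnessSet_eq_choiRobustnessSet {N : Matrix n n ℂ → Matrix m m ℂ}
    (hlin : IsLinearMap ℂ N) (hTP : IsTP N) :
    robustnessSet N = choiRobustnessSet (choiMatrix N) := by
  ext s
  refine and_congr_right fun hs => ?_
  have hs1 : (0 : ℝ) < 1 + s := by linarith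
  have hchoi (T : Matrix n n ℂ → Matrix m m ℂ) :
      choiMatrix (fun X => (((1 + s)⁻¹ : ℝ) : ℂ) • (N X + (s : ℂ) • T X)) =
        (((1 + s)⁻¹ : ℝ) : ℂ) • (choiMatrix N + (s : ℂ) • choiMatrix T) := by
    ext; simp [choiMatrix]
  constructor
  · rintro ⟨T, hT, hP⟩
    refine ⟨choiMatrix T, ⟨hT.2.1.posSemidef_choiMatrix, hT.2.2.ptraceB_choiMatrix⟩, ?_⟩
    have h := (hchoi T ▸ hP.2.1.posSemidef_choiMatrix).smul (Complex.zero_le_real.mpr hs1.le)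
    rwa [smul_smul, ← Complex.ofReal_mul, mul_inv_cancel₀ hs1.ne', Complex.ofReal_one,
      one_smul] at h
  · rintro ⟨K, ⟨hK, hK1⟩, hJK⟩
    have hT := isTP_ofChoiMatrix hK1
    have hlinP : IsLinearMap ℂ
        (fun X => (((1 + s)⁻¹ : ℝ) : ℂ) • (N X + (s : ℂ) • ofChoiMatrix K X)) :=
      ((((1 + s)⁻¹ : ℝ) : ℂ) •
        (hlin.mk' N + (s : ℂ) • (isLinearMap_ofChoiMatrix K).mk' _)).isLinear
    refine ⟨ofChoiMatrix K, ⟨isLinearMap_ofChoiMatrix K, isCP_ofChoiMatrix hK, hT⟩, hlinP, ?_, ?_⟩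
    · rw [isCP_iff_posSemidef_choiMatrix hlinP, hchoi, choiMatrix_ofChoiMatrix]
      exact hJK.smul (Complex.zero_le_real.mpr (inv_nonneg.mpr hs1.le))
    · intro X
      simp only [trace_smul, trace_add, hTP X, hT X, smul_eq_mul]
      push_cast
      field_simp

theorem exists_isLeast_robustnessSet [Nonempty m] {N : Matrix n n ℂ → Matrix m m ℂ}
    (hlin : IsLinearMap ℂ N) (hHP : IsHP N) (hTP : IsTP N) :
    ∃ R, IsLeast (robustnessSet N) R := by
  rw [robustnessSet_eq_choiRobustnessSet hlin hTP]
  exact ⟨_, (isClosed_choiRobustnessSet _).isLeast_csInf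
    (choiRobustnessSet_nonempty (hHP.isHermitian_choiMatrix hlin)) ⟨0, fun _ hs => hs.1⟩⟩

end Robustness

section Decomposition

variable {n m : Type*} [Fintype n] [Fintype m]

theorem isCPTP_sum_smul {ι : Type*} [Fintype ι] {w : ι → ℝ} (hw : ∀ i, 0 ≤ w i)
    (hw1 : ∑ i, w i = 1) {O : ι → Matrix n n ℂ → Matrix m m ℂ} (hO : ∀ i, IsCPTP (O i)) :
    IsCPTP (fun X => ∑ i, (w i : ℂ) • O i X) := by
  refine ⟨?_, fun k M hM => ?_, fun X => ?_⟩
  · convert (∑ i, (w i : ℂ) • (hO i).1.mk' (O i)).isLinear using 1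
    ext X : 1
    simp
  · have h : idTensor (Fin k) (fun X => ∑ i, (w i : ℂ) • O i X) M =
        ∑ i, (w i : ℂ) • idTensor (Fin k) (O i) M := by
      ext; simp [idTensor, Matrix.sum_apply]
    rw [h]
    exact posSemidef_sum _ fun i _ =>
      ((hO i).2.1 k M hM).smul (Complex.zero_le_real.mpr (hw i))
  · simp [trace_sum, (hO _).2.2 X, ← Finset.sum_mul, ← Complex.ofReal_sum, hw1]

theorem exists_isCPTP_sum_smul_eq_smul {ι : Type*} [Fintype ι] {w : ι → ℝ} (hw : ∀ i, 0 ≤ w i)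
    (hpos : 0 < ∑ i, w i) {O : ι → Matrix n n ℂ → Matrix m m ℂ} (hO : ∀ i, IsCPTP (O i)) :
    ∃ T, IsCPTP T ∧ ∀ X, ∑ i, (w i : ℂ) • O i X = ((∑ i, w i : ℝ) : ℂ) • T X := by
  refine ⟨fun X => ∑ i, ((w i / ∑ j, w j : ℝ) : ℂ) • O i X,
    isCPTP_sum_smul (fun i => div_nonneg (hw i) hpos.le) ?_ hO, fun X => ?_⟩
  · rw [← Finset.sum_div, div_self hpos.ne']
  · rw [Finset.smul_sum]
    refine Finset.sum_congr rfl fun i _ => ?_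
    rw [smul_smul, ← Complex.ofReal_mul, mul_div_cancel₀ _ hpos.ne']

theorem mem_robustnessSet_of_eq_smul_sub_smul {N P T : Matrix n n ℂ → Matrix m m ℂ} {s : ℝ}
    (hs : 0 ≤ s) (hP : IsCPTP P) (hT : IsCPTP T)
    (hN : ∀ X, N X = ((1 + s : ℝ) : ℂ) • P X - (s : ℂ) • T X) : s ∈ robustnessSet N := by
  refine ⟨hs, T, hT, ?_⟩
  convert hP using 2 with X
  rw [hN, sub_add_cancel, smul_smul, ← Complex.ofReal_mul, inv_mul_cancel₀ (by positivity),
    Complex.ofReal_one, one_smul]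

theorem two_mul_add_one_mem_decompCosts {N : Matrix n n ℂ → Matrix m m ℂ} {s : ℝ}
    (hs : s ∈ robustnessSet N) : 2 * s + 1 ∈ decompCosts N := by
  obtain ⟨hs0, T, hT, hP⟩ := hs
  refine ⟨2, ![1 + s, -s], ![_, T], fun i => by fin_cases i <;> assumption, fun X => ?_, ?_⟩
  · simp only [Fin.sum_univ_two, Matrix.cons_val_zero, Matrix.cons_val_one]
    rw [smul_smul, ← Complex.ofReal_mul, mul_inv_cancel₀ (by positivity), Complex.ofReal_one,
      one_smul, Complex.ofReal_neg, neg_smul, add_neg_cancel_right]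
  · simp [abs_of_nonneg hs0, abs_of_nonneg (by positivity : 0 ≤ 1 + s)]
    ring

theorem sum_eq_one_of_eq_sum_smul [DecidableEq n] [Nonempty n] {ι : Type*} [Fintype ι]
    {N : Matrix n n ℂ → Matrix m m ℂ} (hN : IsTP N) {η : ι → ℝ}
    {O : ι → Matrix n n ℂ → Matrix m m ℂ} (hO : ∀ i, IsTP (O i))
    (h : ∀ X, N X = ∑ i, (η i : ℂ) • O i X) : ∑ i, η i = 1 := by
  have h1 := hN 1
  rw [h, trace_sum] at h1
  simp only [trace_smul, hO _ 1, smul_eq_mul, ← Finset.sum_mul] at h1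
  have hd : (trace (1 : Matrix n n ℂ)) ≠ 0 := by simp
  exact_mod_cast (mul_eq_right₀ hd).mp h1

theorem exists_mem_robustnessSet_of_mem_decompCosts [DecidableEq n] [Nonempty n]
    {N : Matrix n n ℂ → Matrix m m ℂ} (hN : IsTP N) {c : ℝ} (hc : c ∈ decompCosts N) :
    ∃ s ∈ robustnessSet N, 2 * s + 1 = c := by
  obtain ⟨k, η, O, hO, hdec, rfl⟩ := hc
  have hsum := sum_eq_one_of_eq_sum_smul hN (fun i => (hO i).2.2) hdec
  have hq : 0 ≤ ∑ i, (η i)⁻ := Finset.sum_nonneg fun i _ => negPart_nonneg _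
  have hplus : ∑ i, (η i)⁺ = 1 + ∑ i, (η i)⁻ := by
    rw [← hsum, ← Finset.sum_add_distrib]
    exact Finset.sum_congr rfl fun i _ => by linarith [posPart_sub_negPart (η i)]
  obtain ⟨P, hP, hPeq⟩ := exists_isCPTP_sum_smul_eq_smul (fun i => posPart_nonneg (η i))
    (by linarith) hO
  obtain ⟨T, hT, hTeq⟩ : ∃ T, IsCPTP T ∧
      ∀ X, ∑ i, (((η i)⁻ : ℝ) : ℂ) • O i X = ((∑ i, (η i)⁻ : ℝ) : ℂ) • T X := by
    rcases hq.eq_or_lt with hq0 | hq0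
    · have hη i : (η i)⁻ = 0 :=
        (Finset.sum_eq_zero_iff_of_nonneg fun i _ => negPart_nonneg (η i)).mp hq0.symm i
          (Finset.mem_univ i)
      exact ⟨P, hP, fun X => by simp [hη]⟩
    · exact exists_isCPTP_sum_smul_eq_smul (fun i => negPart_nonneg (η i)) hq0 hO
  refine ⟨_, mem_robustnessSet_of_eq_smul_sub_smul hq hP hT fun X => ?_, ?_⟩
  · rw [hdec, ← hplus, ← hPeq, ← hTeq, ← Finset.sum_sub_distrib]
    refine Finset.sum_congr rfl fun i _ => ?_
    rw [← sub_smul, ← Complex.ofReal_sub, posPart_sub_negPart]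
  · simp only [← posPart_add_negPart, Finset.sum_add_distrib]
    linarith

theorem isLeast_decompCosts [DecidableEq n] [Nonempty n] {N : Matrix n n ℂ → Matrix m m ℂ}
    (hN : IsTP N) {R : ℝ} (hR : IsLeast (robustnessSet N) R) :
    IsLeast (decompCosts N) (2 * R + 1) := by
  refine ⟨two_mul_add_one_mem_decompCosts hR.1, fun c hc => ?_⟩
  obtain ⟨s, hs, rfl⟩ := exists_mem_robustnessSet_of_mem_decompCosts hN hc
  linarith [hR.2 hs]

end Decomposition

/-- the robustness of physical implementability
`R(N) = min{ s ≥ 0 : ∃ CPTP T, (N + sT)/(1+s) is CPTP }` satisfies `2^{ν(N)} = 2R(N) + 1`. -/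
theorem nu_eq_two_robustness_add_one {d : ℕ} (hd : 0 < d)
    (N : Matrix (Fin d) (Fin d) ℂ → Matrix (Fin d) (Fin d) ℂ)
    (hlin : IsLinearMap ℂ N) (hHP : IsHP N) (hTP : IsTP N) :
    ∃ R : ℝ,
      IsLeast { s : ℝ | 0 ≤ s ∧
        ∃ T : Matrix (Fin d) (Fin d) ℂ → Matrix (Fin d) (Fin d) ℂ, IsCPTP T ∧
          IsCPTP (fun X => (((1 + s)⁻¹ : ℝ) : ℂ) • (N X + (s : ℂ) • T X)) } R ∧
      (2 : ℝ) ^ nu N = 2 * R + 1 := by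
  have : Nonempty (Fin d) := Fin.pos_iff_nonempty.mp hd
  obtain ⟨R, hR⟩ := exists_isLeast_robustnessSet hlin hHP hTP
  refine ⟨R, hR, ?_⟩
  rw [nu, (isLeast_decompCosts hTP hR).csInf_eq]
  exact Real.rpow_logb two_pos (by norm_num) (by linarith [hR.1.1])

end
end
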